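/- arXiv:1806.07054 — 2 statements merged into one kernel-verified Lean document; each statement's English description precedes it below -/
import Mathlib

section
/- Let N be a positive integer, let ν > 0 be a real number, let A be a symmetric positive definite real N×N matrix admitting a factorization A = L Lᵀ with L an invertible real N×N matrix, and let B be a real N×N matrix with xᵀ B x ≥ 0 for every x ∈ ℝᴺ. If u, a ∈ ℝᴺ satisfy (A + ν B) u = A a, then ‖Lᵀ u‖₂ ≤ ‖Lᵀ a‖₂, where ‖·‖₂ denotes the Euclidean norm on ℝᴺ. -/
/-!
Testing the equation with `u` gives
`‖Lᵀu‖² = uᵀAu ≤ uᵀAu + ν uᵀBu = uᵀAa = ⟪Lᵀu, Lᵀa⟫`, and Cauchy–Schwarz finishes.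
-/

open Matrix

/-- Euclidean (`ℓ²`) norm of a vector in `ℝᴺ`. -/
noncomputable def eNorm {n : ℕ} (x : Fin n → ℝ) : ℝ :=
  ‖(WithLp.equiv 2 (Fin n → ℝ)).symm x‖

theorem norm_le_norm_of_inner_self_le_inner {E : Type*} [NormedAddCommGroup E]
    [InnerProductSpace ℝ E] {p q : E} (h : inner ℝ p p ≤ inner ℝ p q) : ‖p‖ ≤ ‖q‖ := by
  rcases (norm_nonneg p).eq_or_lt with hp | hp
  · exact hp ▸ norm_nonneg q
  · refine le_of_mul_le_mul_left ?_ hp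
    calc ‖p‖ * ‖p‖ = inner ℝ p p := (real_inner_self_eq_norm_mul_norm p).symm
      _ ≤ inner ℝ p q := h
      _ ≤ ‖p‖ * ‖q‖ := real_inner_le_norm p q

theorem eNorm_le_of_dotProduct_self_le {n : ℕ} {p q : Fin n → ℝ} (h : p ⬝ᵥ p ≤ p ⬝ᵥ q) :
    eNorm p ≤ eNorm q := by
  refine norm_le_norm_of_inner_self_le_inner ?_
  simpa only [WithLp.equiv_symm_apply, EuclideanSpace.inner_toLp_toLp, star_trivial,
    dotProduct_comm q] using h

theorem dotProduct_mulVec_mul_transpose {m n R : Type*} [Fintype m] [Fintype n] [CommSemiring R]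
    (L : Matrix m n R) (x y : m → R) :
    x ⬝ᵥ (L * Lᵀ) *ᵥ y = (Lᵀ *ᵥ x) ⬝ᵥ (Lᵀ *ᵥ y) := by
  rw [← mulVec_mulVec, dotProduct_mulVec, mulVec_transpose, mulVec_transpose]

theorem dotProduct_mulVec_le_of_add_smul_mulVec_eq {n R : Type*} [Fintype n] [CommRing R]
    [PartialOrder R] [IsOrderedRing R] {A B : Matrix n n R} {ν : R} {u a : n → R}
    (hν : 0 ≤ ν) (hB : 0 ≤ u ⬝ᵥ B *ᵥ u) (heq : (A + ν • B) *ᵥ u = A *ᵥ a) :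
    u ⬝ᵥ A *ᵥ u ≤ u ⬝ᵥ A *ᵥ a := by
  have galerkin : u ⬝ᵥ A *ᵥ u + ν * (u ⬝ᵥ B *ᵥ u) = u ⬝ᵥ A *ᵥ a := by
    rw [← heq, add_mulVec, smul_mulVec, dotProduct_add, dotProduct_smul, smul_eq_mul]
  rw [← galerkin]
  exact le_add_of_nonneg_right (mul_nonneg hν hB)

theorem statement_1_general (N : ℕ) (ν : ℝ) (hν : 0 < ν)
    (A B L : Matrix (Fin N) (Fin N) ℝ)
    (hfac : A = L * Lᵀ)
    (hB : ∀ x : Fin N → ℝ, 0 ≤ x ⬝ᵥ B.mulVec x)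
    (u a : Fin N → ℝ)
    (heq : (A + ν • B).mulVec u = A.mulVec a) :
    eNorm (Lᵀ.mulVec u) ≤ eNorm (Lᵀ.mulVec a) := by
  have energy := dotProduct_mulVec_le_of_add_smul_mulVec_eq hν.le (hB u) heq
  rw [hfac, dotProduct_mulVec_mul_transpose, dotProduct_mulVec_mul_transpose] at energy
  exact eNorm_le_of_dotProduct_self_le energy

theorem statement_1 (N : ℕ) (hN : 0 < N) (ν : ℝ) (hν : 0 < ν)
    (A B L : Matrix (Fin N) (Fin N) ℝ)
    (hA : A.PosDef)
    (hAsymm : A.IsSymm)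
    (hfac : A = L * Lᵀ)
    (hL : IsUnit L)
    (hB : ∀ x : Fin N → ℝ, 0 ≤ x ⬝ᵥ B.mulVec x)
    (u a : Fin N → ℝ)
    (heq : (A + ν • B).mulVec u = A.mulVec a) :
    eNorm (Lᵀ.mulVec u) ≤ eNorm (Lᵀ.mulVec a) :=
  statement_1_general N ν hν A B L hfac hB u a heq
end

section
/- Let N be a positive integer, ν > 0 and C_p > 0 real numbers. Let M and U be symmetric positive definite real N×N matrices with factorizations M = L_M L_Mᵀ and U = L_U L_Uᵀ, and let G be a real N×N matrix with xᵀ G x ≥ 0 for every x ∈ ℝᴺ. Assume the discrete Poincaré inequality ‖L_Uᵀ x‖₂ ≤ C_p ‖L_Mᵀ x‖₂ holds for every x ∈ ℝᴺ, and assume G + ν M is invertible. If û, â ∈ ℝᴺ satisfy (G + ν M) û = U â, then ‖L_Mᵀ û‖₂ ≤ (C_p/ν) ‖L_Uᵀ â‖₂, where ‖·‖₂ is the Euclidean norm on ℝᴺ. -/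
open Matrix

section EuclideanNorm

variable {n : ℕ}

lemma eNorm_nonneg (x : Fin n → ℝ) : 0 ≤ eNorm x := norm_nonneg _

lemma dotProduct_eq_inner_toLp (x y : Fin n → ℝ) :
    x ⬝ᵥ y = inner ℝ ((WithLp.equiv 2 (Fin n → ℝ)).symm x) ((WithLp.equiv 2 (Fin n → ℝ)).symm y) := by
  simp [dotProduct, PiLp.inner_apply, mul_comm]

lemma dotProduct_self_eq_eNorm_sq (x : Fin n → ℝ) : x ⬝ᵥ x = eNorm x ^ 2 := by
  rw [dotProduct_eq_inner_toLp, real_inner_self_eq_norm_sq, eNorm]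

lemma dotProduct_le_eNorm_mul_eNorm (x y : Fin n → ℝ) : x ⬝ᵥ y ≤ eNorm x * eNorm y := by
  rw [dotProduct_eq_inner_toLp]
  exact real_inner_le_norm _ _

end EuclideanNorm

lemma dotProduct_mul_transpose_mulVec {m k R : Type*} [Fintype m] [Fintype k] [CommSemiring R]
    (L : Matrix m k R) (x y : m → R) :
    x ⬝ᵥ (L * Lᵀ) *ᵥ y = (Lᵀ *ᵥ x) ⬝ᵥ (Lᵀ *ᵥ y) := by
  rw [← mulVec_mulVec, dotProduct_mulVec, ← mulVec_transpose]

lemma mul_eNorm_sq_le_dotProduct_add_smul_mulVec {n : ℕ} {G : Matrix (Fin n) (Fin n) ℝ}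
    (hG : ∀ x : Fin n → ℝ, 0 ≤ x ⬝ᵥ G *ᵥ x) (ν : ℝ) (L : Matrix (Fin n) (Fin n) ℝ)
    (u : Fin n → ℝ) :
    ν * eNorm (Lᵀ *ᵥ u) ^ 2 ≤ u ⬝ᵥ (G + ν • (L * Lᵀ)) *ᵥ u := by
  rw [add_mulVec, smul_mulVec, dotProduct_add, dotProduct_smul, smul_eq_mul,
    dotProduct_mul_transpose_mulVec, dotProduct_self_eq_eNorm_sq]
  linarith [hG u]

lemma le_div_of_mul_sq_le_mul {a c ν : ℝ} (ha : 0 ≤ a) (hc : 0 ≤ c) (hν : 0 < ν)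
    (h : ν * a ^ 2 ≤ c * a) : a ≤ c / ν := by
  rw [le_div_iff₀ hν]
  rcases ha.eq_or_lt with rfl | ha
  · simpa using hc
  · nlinarith

theorem statement_4_general (N : ℕ) (ν Cp : ℝ) (hν : 0 < ν) (hCp : 0 < Cp)
    (M U G LM LU : Matrix (Fin N) (Fin N) ℝ)
    (hfacM : M = LM * LMᵀ)
    (hfacU : U = LU * LUᵀ)
    (hG : ∀ x : Fin N → ℝ, 0 ≤ x ⬝ᵥ G.mulVec x)
    (hPoincare : ∀ x : Fin N → ℝ, eNorm (LUᵀ.mulVec x) ≤ Cp * eNorm (LMᵀ.mulVec x))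
    (uhat ahat : Fin N → ℝ)
    (heq : (G + ν • M).mulVec uhat = U.mulVec ahat) :
    eNorm (LMᵀ.mulVec uhat) ≤ (Cp / ν) * eNorm (LUᵀ.mulVec ahat) := by
  set a := eNorm (LMᵀ *ᵥ uhat)
  set b := eNorm (LUᵀ *ᵥ ahat)
  have hcoercive : ν * a ^ 2 ≤ uhat ⬝ᵥ U *ᵥ ahat := by
    rw [← heq, hfacM]
    exact mul_eNorm_sq_le_dotProduct_add_smul_mulVec hG ν LM uhat
  have hload : uhat ⬝ᵥ U *ᵥ ahat ≤ Cp * b * a :=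
    calc uhat ⬝ᵥ U *ᵥ ahat = (LUᵀ *ᵥ uhat) ⬝ᵥ (LUᵀ *ᵥ ahat) := by
          rw [hfacU, dotProduct_mul_transpose_mulVec]
      _ ≤ eNorm (LUᵀ *ᵥ uhat) * b := dotProduct_le_eNorm_mul_eNorm _ _
      _ ≤ Cp * a * b := by gcongr; exacts [eNorm_nonneg _, hPoincare uhat]
      _ = Cp * b * a := by ring
  rw [div_mul_eq_mul_div]
  exact le_div_of_mul_sq_le_mul (eNorm_nonneg _) (mul_nonneg hCp.le (eNorm_nonneg _)) hν
    (hcoercive.trans hload)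

theorem statement_4 (N : ℕ) (hN : 0 < N) (ν Cp : ℝ) (hν : 0 < ν) (hCp : 0 < Cp)
    (M U G LM LU : Matrix (Fin N) (Fin N) ℝ)
    (hM : M.PosDef) (hMsymm : M.IsSymm)
    (hU : U.PosDef) (hUsymm : U.IsSymm)
    (hfacM : M = LM * LMᵀ)
    (hfacU : U = LU * LUᵀ)
    (hG : ∀ x : Fin N → ℝ, 0 ≤ x ⬝ᵥ G.mulVec x)
    (hPoincare : ∀ x : Fin N → ℝ, eNorm (LUᵀ.mulVec x) ≤ Cp * eNorm (LMᵀ.mulVec x))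
    (hinv : IsUnit (G + ν • M))
    (uhat ahat : Fin N → ℝ)
    (heq : (G + ν • M).mulVec uhat = U.mulVec ahat) :
    eNorm (LMᵀ.mulVec uhat) ≤ (Cp / ν) * eNorm (LUᵀ.mulVec ahat) :=
  statement_4_general N ν Cp hν hCp M U G LM LU hfacM hfacU hG hPoincare uhat ahat heq
end
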